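/- arXiv:1207.2382 — 3 statements merged into one kernel-verified Lean document; each statement's English description precedes it below -/
import Mathlib

section
/- Let r ≥ 1, D ≥ 1, and let V be a ℂ-linear subspace of the space of homogeneous polynomials of degree D in MvPolynomial (Fin (r+1)) ℂ containing at least one nonzero element. If the common projective zero locus Z of V in ℙ^r(ℂ) is finite, then there exist f_1, …, f_r ∈ V whose common projective zero locus is finite and contains Z. -/
open MvPolynomial

/-- The projective zero locus in `ℙ^r(ℂ)` of a homogeneous polynomial
`f ∈ ℂ[x_0, …, x_r]`: the set of points all of whose nonzero representatives
annihilate `f`. -/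
def projZeroLocus (r : ℕ) (f : MvPolynomial (Fin (r+1)) ℂ) :
    Set (Projectivization ℂ (Fin (r+1) → ℂ)) :=
  {x | ∀ (v : Fin (r+1) → ℂ) (hv : v ≠ 0),
    Projectivization.mk ℂ v hv = x → MvPolynomial.eval v f = 0}

/-!
A linear form `φ` vanishing at none of the finitely many points of `Z` leaves the origin as the
only common zero of `V` in the hyperplane `ker φ ≅ ℂ^r`. Sections are then chosen one per
dimension: if `g₁, …, g_k ∈ V` have only the origin as common zero in `U ∩ ker ψ`, they have only
finitely many common zeros in `ℙ(U)`, and a general element of `V` misses all of them.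

Finiteness: if homogeneous polynomials `T` and a linear form `L` have only the origin as common
zero, the Nullstellensatz puts all forms of some degree `N` into `(T, L)`; hence modulo `(T)` every
form of degree `N + e` is `L ^ e * h` with `deg h = N`. Since `L` vanishes nowhere on the
projective zero set of `T`, its points are separated by forms of degree `N`, so there are at most
as many of them as the dimension of the space of such forms.
-/

open Module
open scoped LinearAlgebra.Projectivization

namespace Projectivization

variable {K V : Type*} [Field K] [AddCommGroup V] [Module K V]

theorem apply_mk_rep_eq_zero_iff (φ : Dual K V) {v : V} (hv : v ≠ 0) :
    φ (mk K v hv).rep = 0 ↔ φ v = 0 := by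
  obtain ⟨a, ha⟩ := exists_smul_eq_mk_rep K v hv
  rw [← ha, Units.smul_def, map_smul, smul_eq_zero, or_iff_right a.ne_zero]

theorem exists_dual_apply_rep_eq_zero_ne_zero {x y : ℙ K V} (hxy : x ≠ y) :
    ∃ φ : Dual K V, φ x.rep = 0 ∧ φ y.rep ≠ 0 := by
  have hy : y.rep ∉ K ∙ x.rep := by
    rw [Submodule.mem_span_singleton]
    rintro ⟨a, ha⟩
    have hyx := (mk_eq_mk_iff' K y.rep x.rep y.rep_nonzero x.rep_nonzero).mpr ⟨a, ha⟩
    rw [mk_rep, mk_rep] at hyx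
    exact hxy hyx.symm
  obtain ⟨φ, hφy, hφx⟩ := Submodule.exists_dual_map_eq_bot_of_notMem hy inferInstance
  refine ⟨φ, ?_, hφy⟩
  exact (Submodule.mem_bot K).mp
    (hφx ▸ Submodule.mem_map_of_mem (Submodule.mem_span_singleton_self x.rep))

theorem exists_dual_ne_zero_forall_apply_rep_ne_zero [Infinite K] [Nontrivial V]
    (S : Set (ℙ K V)) [Finite S] : ∃ φ : Dual K V, φ ≠ 0 ∧ ∀ x ∈ S, φ x.rep ≠ 0 := by
  obtain ⟨v, hv⟩ := exists_ne (0 : V)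
  have : Finite (insert (mk K v hv) S : Set (ℙ K V)) := ((Set.toFinite S).insert _).to_subtype
  obtain ⟨φ, hφ⟩ := Module.exists_dual_forall_apply_ne_zero (K := K)
    (fun x : (insert (mk K v hv) S : Set (ℙ K V)) => x.1.rep) fun x => x.1.rep_nonzero
  exact ⟨φ, fun h0 => hφ ⟨_, Set.mem_insert _ _⟩ (by simp [h0]),
    fun x hx => hφ ⟨x, Set.mem_insert_of_mem _ hx⟩⟩

end Projectivization

theorem Module.Dual.linearIndependent_of_exists_separating {ι K W : Type*} [Field K]
    [AddCommGroup W] [Module K W] (τ : ι → Dual K W)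
    (h : ∀ (s : Finset ι) (i : ι), ∃ w, τ i w ≠ 0 ∧ ∀ j ∈ s, j ≠ i → τ j w = 0) :
    LinearIndependent K τ := by
  rw [linearIndependent_iff']
  intro s g hg i hi
  obtain ⟨w, hiw, hw⟩ := h s i
  have hgw := LinearMap.congr_fun hg w
  simp only [LinearMap.sum_apply, LinearMap.smul_apply, smul_eq_mul, LinearMap.zero_apply] at hgw
  rw [Finset.sum_eq_single_of_mem i hi fun j hj hji => by rw [hw j hj hji, mul_zero]] at hgw
  exact (mul_eq_zero.mp hgw).resolve_right hiw

theorem Submodule.exists_dual_finrank_inf_ker_le {K M : Type*} [Field K] [AddCommGroup M]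
    [Module K M] [FiniteDimensional K M] {U : Submodule K M} {k : ℕ}
    (hU : finrank K U ≤ k + 1) : ∃ φ : Dual K M, finrank K ↥(U ⊓ LinearMap.ker φ) ≤ k := by
  by_cases hU0 : U = ⊥
  · exact ⟨0, by rw [hU0, bot_inf_eq, finrank_bot]; exact Nat.zero_le k⟩
  obtain ⟨u, huU, hu0⟩ := Submodule.exists_mem_ne_zero_of_ne_bot hU0
  obtain ⟨φ, hφu⟩ := Module.Projective.exists_dual_ne_zero K hu0
  have := Submodule.finrank_lt_finrank_of_lt
    (inf_le_left.lt_of_ne fun h => hφu (h ▸ huU : u ∈ U ⊓ LinearMap.ker φ).2)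
  exact ⟨φ, by omega⟩

namespace MvPolynomial

section Homogeneous

variable {R σ : Type*} [CommSemiring R]

theorem IsHomogeneous.eval_smul [Fintype σ] {f : MvPolynomial σ R} {e : ℕ}
    (hf : f.IsHomogeneous e) (t : R) (v : σ → R) : eval (t • v) f = t ^ e * eval v f := by
  rw [eval_eq', eval_eq', Finset.mul_sum]
  refine Finset.sum_congr rfl fun d hd => ?_
  have hd : ∑ i, d i = e := by
    rw [← Finsupp.degree_eq_sum, Finsupp.degree_eq_weight_one]
    exact hf (mem_support_iff.mp hd)
  simp only [Pi.smul_apply, smul_eq_mul, mul_pow, Finset.prod_mul_distrib,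
    Finset.prod_pow_eq_pow_sum, hd]
  ring

attribute [local instance] gradedAlgebra in
theorem isHomogeneous_span {T : Set (MvPolynomial σ R)} (hT : ∀ p ∈ T, ∃ e, p.IsHomogeneous e) :
    (Ideal.span T).IsHomogeneous (homogeneousSubmodule σ R) :=
  Ideal.homogeneous_span _ T hT

attribute [local instance] gradedAlgebra in
theorem homogeneousComponent_mul_of_isHomogeneous {p q : MvPolynomial σ R} {i n : ℕ}
    (hq : q.IsHomogeneous i) (hin : i ≤ n) :
    homogeneousComponent n (p * q) = homogeneousComponent (n - i) p * q := by
  have hdec (x : MvPolynomial σ R) (m : ℕ) :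
      (DirectSum.decompose (homogeneousSubmodule σ R) x m : MvPolynomial σ R) =
        homogeneousComponent m x :=
    decomposition.decompose'_apply x m
  rw [← hdec, ← hdec]
  exact DirectSum.coe_decompose_mul_of_right_mem_of_le _
    ((mem_homogeneousSubmodule i q).mpr hq) hin

theorem mem_span_X_pow_of_isHomogeneous {f : MvPolynomial σ R} {n : ℕ}
    (hf : f.IsHomogeneous n) : f ∈ Ideal.span (Set.range X) ^ n :=
  (Ideal.mem_span_pow_iff_exists_isHomogeneous X f).mpr
    ⟨map C f, hf.map C, by rw [eval_map, eval₂_eta]⟩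

theorem exists_span_X_pow_le_of_zeroLocus_subset {k : Type*} [Field k] [IsAlgClosed k]
    [Finite σ] {I : Ideal (MvPolynomial σ k)} (hI : zeroLocus k I ⊆ {0}) :
    ∃ N, Ideal.span (Set.range X) ^ N ≤ I := by
  refine Ideal.exists_pow_le_of_le_radical_of_fg ?_ (Submodule.fg_span (Set.finite_range X))
  rw [← vanishingIdeal_zeroLocus_eq_radical (K := k), Ideal.span_le]
  rintro _ ⟨i, rfl⟩
  rw [SetLike.mem_coe, mem_vanishingIdeal_iff]
  intro v hv
  simp [Set.mem_singleton_iff.mp (hI hv)]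

end Homogeneous

theorem exists_isHomogeneous_sub_pow_mul_mem_span {R σ : Type*} [CommRing R]
    {T : Set (MvPolynomial σ R)} (hT : ∀ p ∈ T, ∃ e, p.IsHomogeneous e)
    {L : MvPolynomial σ R} (hL : L.IsHomogeneous 1) {N : ℕ}
    (hN : Ideal.span (Set.range X) ^ N ≤ Ideal.span (insert L T)) (e : ℕ)
    {f : MvPolynomial σ R} (hf : f.IsHomogeneous (N + e)) :
    ∃ h : MvPolynomial σ R, h.IsHomogeneous N ∧ f - L ^ e * h ∈ Ideal.span T := by
  induction e generalizing f with
  | zero => exact ⟨f, hf, by simp⟩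
  | succ e ih =>
    have hfI : f ∈ Ideal.span (insert L T) :=
      hN (Ideal.pow_le_pow_right (by omega) (mem_span_X_pow_of_isHomogeneous hf))
    rw [Ideal.span_insert, Submodule.mem_sup] at hfI
    obtain ⟨_, hcL, b, hb, rfl⟩ := hfI
    obtain ⟨c, rfl⟩ := Ideal.mem_span_singleton'.mp hcL
    obtain ⟨h, hh, hch⟩ := ih (homogeneousComponent_isHomogeneous (N + e) c)
    refine ⟨h, hh, ?_⟩
    -- only the parts of degree `N + e + 1` of `c * L` and of `b` survive in `f`
    have hf' : c * L + b =
        homogeneousComponent (N + e) c * L + homogeneousComponent (N + (e + 1)) b := by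
      rw [← homogeneousComponent_eq_self hf, map_add,
        homogeneousComponent_mul_of_isHomogeneous hL (by omega)]
      rfl
    rw [hf', show ∀ a b' : MvPolynomial σ R, a * L + b' - L ^ (e + 1) * h =
      (a - L ^ e * h) * L + b' from fun _ _ => by ring]
    exact (Ideal.span T).add_mem (Ideal.mul_mem_right L _ hch)
      (homogeneousComponent_mem_of_mem (isHomogeneous_span hT) hb _)

section LinearForm

variable {K σ : Type*} [Field K] [Fintype σ] [DecidableEq σ]

noncomputable def linearForm (φ : Dual K (σ → K)) : MvPolynomial σ K :=
  ∑ i, C (φ (Pi.single i 1)) * X i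

theorem isHomogeneous_linearForm (φ : Dual K (σ → K)) : (linearForm φ).IsHomogeneous 1 :=
  IsHomogeneous.sum _ _ _ fun i _ => (isHomogeneous_X K i).C_mul _

@[simp]
theorem eval_linearForm (φ : Dual K (σ → K)) (v : σ → K) : eval v (linearForm φ) = φ v := by
  conv_rhs => rw [← Finset.univ_sum_single v]
  simp only [linearForm, map_sum, map_mul, eval_C, eval_X]
  refine Finset.sum_congr rfl fun i _ => ?_
  rw [mul_comm, ← smul_eq_mul, ← LinearMap.map_smul, ← Pi.single_smul', smul_eq_mul, mul_one]

theorem exists_isHomogeneous_eval_rep_ne_zero_eq_zero (s : Finset (ℙ K (σ → K)))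
    (x : ℙ K (σ → K)) :
    ∃ (f : MvPolynomial σ K) (e : ℕ), f.IsHomogeneous e ∧ eval x.rep f ≠ 0 ∧
      ∀ y ∈ s, y ≠ x → eval y.rep f = 0 := by
  classical
  choose! φ hφy hφx using fun y (hy : y ≠ x) =>
    Projectivization.exists_dual_apply_rep_eq_zero_ne_zero hy
  refine ⟨∏ y ∈ s.filter (· ≠ x), linearForm (φ y), _,
    IsHomogeneous.prod _ _ _ fun y _ => isHomogeneous_linearForm (φ y), ?_, fun y hy hyx => ?_⟩
  · simp only [map_prod, eval_linearForm, Finset.prod_ne_zero_iff, Finset.mem_filter]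
    exact fun y ⟨_, hyx⟩ => hφx y hyx
  · rw [map_prod]
    exact Finset.prod_eq_zero (i := y) (Finset.mem_filter.mpr ⟨hy, hyx⟩) (by simp [hφy y hyx])

end LinearForm

end MvPolynomial

def CutsOutOrigin {K σ : Type*} [Field K] (U : Submodule K (σ → K))
    (F : Set (MvPolynomial σ K)) : Prop :=
  ∀ v ∈ U, (∀ f ∈ F, eval v f = 0) → v = 0

theorem CutsOutOrigin.mono {K σ : Type*} [Field K] {U U' : Submodule K (σ → K)}
    {F : Set (MvPolynomial σ K)} (h : CutsOutOrigin U F) (hU : U' ≤ U) : CutsOutOrigin U' F :=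
  fun v hv => h v (hU hv)

section ProjZeroLocus

variable {r : ℕ} {T : Set (MvPolynomial (Fin (r+1)) ℂ)}

theorem mk_mem_projZeroLocus_iff {f : MvPolynomial (Fin (r+1)) ℂ} {e : ℕ}
    (hf : f.IsHomogeneous e) {v : Fin (r+1) → ℂ} (hv : v ≠ 0) :
    Projectivization.mk ℂ v hv ∈ projZeroLocus r f ↔ eval v f = 0 := by
  refine ⟨fun h => h v hv rfl, fun h w hw hwv => ?_⟩
  obtain ⟨a, rfl⟩ := (Projectivization.mk_eq_mk_iff ℂ w v hw hv).mp hwv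
  rw [Units.smul_def, hf.eval_smul, h, mul_zero]

theorem mem_projZeroLocus_iff {f : MvPolynomial (Fin (r+1)) ℂ} {e : ℕ}
    (hf : f.IsHomogeneous e) (x : ℙ ℂ (Fin (r+1) → ℂ)) :
    x ∈ projZeroLocus r f ↔ eval x.rep f = 0 := by
  conv_lhs => rw [← x.mk_rep]
  exact mk_mem_projZeroLocus_iff hf x.rep_nonzero

theorem mk_mem_iInter_projZeroLocus_iff (hT : ∀ p ∈ T, ∃ e, p.IsHomogeneous e)
    {v : Fin (r+1) → ℂ} (hv : v ≠ 0) :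
    Projectivization.mk ℂ v hv ∈ ⋂ p ∈ T, projZeroLocus r p ↔ ∀ p ∈ T, eval v p = 0 := by
  simp only [Set.mem_iInter₂]
  exact forall₂_congr fun p hp => mk_mem_projZeroLocus_iff (hT p hp).choose_spec hv

theorem mem_iInter_projZeroLocus_iff (hT : ∀ p ∈ T, ∃ e, p.IsHomogeneous e)
    (x : ℙ ℂ (Fin (r+1) → ℂ)) :
    x ∈ ⋂ p ∈ T, projZeroLocus r p ↔ ∀ p ∈ T, eval x.rep p = 0 := by
  conv_lhs => rw [← x.mk_rep]
  exact mk_mem_iInter_projZeroLocus_iff hT x.rep_nonzero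

theorem eval_rep_eq_zero_of_mem_span (hT : ∀ p ∈ T, ∃ e, p.IsHomogeneous e)
    {x : ℙ ℂ (Fin (r+1) → ℂ)} (hx : x ∈ ⋂ p ∈ T, projZeroLocus r p) {p : MvPolynomial _ ℂ}
    (hp : p ∈ Ideal.span T) : eval x.rep p = 0 :=
  Ideal.span_le (I := RingHom.ker (eval x.rep)).mpr ((mem_iInter_projZeroLocus_iff hT x).mp hx) hp

theorem CutsOutOrigin.apply_rep_ne_zero (hT : ∀ p ∈ T, ∃ e, p.IsHomogeneous e)
    {φ : Dual ℂ (Fin (r+1) → ℂ)} (hTφ : CutsOutOrigin (LinearMap.ker φ) T)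
    {x : ℙ ℂ (Fin (r+1) → ℂ)} (hx : x ∈ ⋂ p ∈ T, projZeroLocus r p) : φ x.rep ≠ 0 :=
  fun hφx => x.rep_nonzero (hTφ _ hφx ((mem_iInter_projZeroLocus_iff hT x).mp hx))

theorem exists_isHomogeneous_separating_of_span_X_pow_le
    (hT : ∀ p ∈ T, ∃ e, p.IsHomogeneous e) {φ : Dual ℂ (Fin (r+1) → ℂ)}
    (hTφ : CutsOutOrigin (LinearMap.ker φ) T) {N : ℕ}
    (hN : Ideal.span (Set.range X) ^ N ≤ Ideal.span (insert (linearForm φ) T))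
    {s : Finset (ℙ ℂ (Fin (r+1) → ℂ))} (hs : ∀ y ∈ s, y ∈ ⋂ p ∈ T, projZeroLocus r p)
    {x : ℙ ℂ (Fin (r+1) → ℂ)} (hx : x ∈ ⋂ p ∈ T, projZeroLocus r p) :
    ∃ h : MvPolynomial (Fin (r+1)) ℂ, h.IsHomogeneous N ∧ eval x.rep h ≠ 0 ∧
      ∀ y ∈ s, y ≠ x → eval y.rep h = 0 := by
  obtain ⟨f, e, hf, hfx, hfs⟩ := exists_isHomogeneous_eval_rep_ne_zero_eq_zero s x
  obtain ⟨h, hh, hfh⟩ := exists_isHomogeneous_sub_pow_mul_mem_span hT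
    (isHomogeneous_linearForm φ) hN e (f := linearForm φ ^ N * f)
    (by simpa using (isHomogeneous_linearForm φ).pow N |>.mul hf)
  have key {y} (hy : y ∈ ⋂ p ∈ T, projZeroLocus r p) :
      eval y.rep h = 0 ↔ eval y.rep f = 0 := by
    have hφy := hTφ.apply_rep_ne_zero hT hy
    have hfhy : φ y.rep ^ N * eval y.rep f = φ y.rep ^ e * eval y.rep h := by
      simpa [sub_eq_zero] using eval_rep_eq_zero_of_mem_span hT hy hfh
    rw [← mul_eq_zero_iff_left (pow_ne_zero e hφy), ← hfhy,
      mul_eq_zero_iff_left (pow_ne_zero N hφy)]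
  exact ⟨h, hh, fun hxh => hfx ((key hx).mp hxh),
    fun y hy hyx => (key (hs y hy)).mpr (hfs y hy hyx)⟩

theorem finite_iInter_projZeroLocus_of_cutsOutOrigin (hT : ∀ p ∈ T, ∃ e, p.IsHomogeneous e)
    (φ : Dual ℂ (Fin (r+1) → ℂ)) (hTφ : CutsOutOrigin (LinearMap.ker φ) T) :
    (⋂ p ∈ T, projZeroLocus r p).Finite := by
  classical
  obtain ⟨N, hN⟩ := exists_span_X_pow_le_of_zeroLocus_subset
    (I := Ideal.span (insert (linearForm φ) T)) fun v hv => by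
      rw [mem_zeroLocus_iff] at hv
      refine hTφ v ?_ fun p hp => ?_
      · simpa using hv _ (Ideal.subset_span (Set.mem_insert _ _))
      · simpa using hv p (Ideal.subset_span (Set.mem_insert_of_mem _ hp))
  let τ (x : ↥(⋂ p ∈ T, projZeroLocus r p)) : Dual ℂ (restrictTotalDegree (Fin (r+1)) ℂ N) :=
    (aeval x.1.rep).toLinearMap.domRestrict _
  suffices LinearIndependent ℂ τ from Set.finite_coe_iff.mp this.finite
  refine Dual.linearIndependent_of_exists_separating τ fun s x => ?_
  obtain ⟨h, hh, hhx, hhs⟩ := exists_isHomogeneous_separating_of_span_X_pow_le hT hTφ hN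
    (s := s.image (↑)) (by simp only [Finset.mem_image]; rintro _ ⟨y, -, rfl⟩; exact y.2) x.2
  exact ⟨⟨h, (mem_restrictTotalDegree _ _ _).mpr hh.totalDegree_le⟩, hhx,
    fun y hy hyx => hhs y (Finset.mem_image_of_mem _ hy) (Subtype.coe_ne_coe.mpr hyx)⟩

end ProjZeroLocus

theorem exists_mem_cutsOutOrigin_insert {r D : ℕ} {V : Submodule ℂ (MvPolynomial (Fin (r+1)) ℂ)}
    (hV : V ≤ homogeneousSubmodule (Fin (r+1)) ℂ D) {U : Submodule ℂ (Fin (r+1) → ℂ)}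
    (hVU : CutsOutOrigin U V) {F : Set (MvPolynomial (Fin (r+1)) ℂ)}
    (hF : ∀ p ∈ F, ∃ e, p.IsHomogeneous e) (φ : Dual ℂ (Fin (r+1) → ℂ))
    (hUF : CutsOutOrigin (U ⊓ LinearMap.ker φ) F) :
    ∃ f ∈ V, CutsOutOrigin U (insert f F) := by
  -- the projective zero set of `T` is that of `F` inside `ℙ(U)`
  set T := F ∪ linearForm '' (U.dualAnnihilator : Set (Dual ℂ (Fin (r+1) → ℂ)))
  have hT : ∀ p ∈ T, ∃ e, p.IsHomogeneous e := by
    rintro p (hp | ⟨ψ, -, rfl⟩)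
    exacts [hF p hp, ⟨1, isHomogeneous_linearForm ψ⟩]
  have hmemU : ∀ v, (∀ p ∈ T, eval v p = 0) → v ∈ U := fun v hv =>
    (Subspace.forall_mem_dualAnnihilator_apply_eq_zero_iff U v).mp fun ψ hψ => by
      simpa using hv _ (Or.inr ⟨ψ, hψ, rfl⟩)
  have : Finite (⋂ p ∈ T, projZeroLocus r p) :=
    (finite_iInter_projZeroLocus_of_cutsOutOrigin hT φ fun v hv hvT =>
      hUF v ⟨hmemU v hvT, hv⟩ fun p hp => hvT p (Or.inl hp)).to_subtype
  obtain ⟨f, hfV, hf⟩ := Dual.exists_forall_mem_ne_zero_of_forall_exists V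
    (fun x : ↥(⋂ p ∈ T, projZeroLocus r p) => (aeval x.1.rep).toLinearMap) fun x => by
      by_contra! hx
      exact x.1.rep_nonzero (hVU _ (hmemU _ ((mem_iInter_projZeroLocus_iff hT x.1).mp x.2)) hx)
  refine ⟨f, hfV, fun v hvU hv => ?_⟩
  by_contra hv0
  rw [Set.forall_mem_insert] at hv
  have hvT : ∀ p ∈ T, eval v p = 0 := by
    rintro p (hp | ⟨ψ, hψ, rfl⟩)
    exacts [hv.2 p hp, by simpa using (U.mem_dualAnnihilator ψ).mp hψ v hvU]
  refine hf ⟨_, (mk_mem_iInter_projZeroLocus_iff hT hv0).mpr hvT⟩ ?_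
  change eval _ f = 0
  exact (mem_projZeroLocus_iff (hV hfV) _).mp ((mk_mem_projZeroLocus_iff (hV hfV) hv0).mpr hv.1)

theorem exists_fin_cutsOutOrigin {r D : ℕ} {V : Submodule ℂ (MvPolynomial (Fin (r+1)) ℂ)}
    (hV : V ≤ homogeneousSubmodule (Fin (r+1)) ℂ D) (k : ℕ) {U : Submodule ℂ (Fin (r+1) → ℂ)}
    (hUk : finrank ℂ U ≤ k) (hVU : CutsOutOrigin U V) :
    ∃ g : Fin k → MvPolynomial (Fin (r+1)) ℂ, (∀ i, g i ∈ V) ∧ CutsOutOrigin U (Set.range g) := by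
  induction k generalizing U with
  | zero =>
    refine ⟨Fin.elim0, fun i => i.elim0, fun v hv _ => ?_⟩
    rwa [Submodule.finrank_eq_zero.mp (Nat.le_zero.mp hUk), Submodule.mem_bot] at hv
  | succ k ih =>
    obtain ⟨φ, hφ⟩ := Submodule.exists_dual_finrank_inf_ker_le hUk
    obtain ⟨g, hgV, hg⟩ := ih hφ (hVU.mono inf_le_left)
    obtain ⟨f, hfV, hf⟩ := exists_mem_cutsOutOrigin_insert hV hVU
      (by rintro _ ⟨i, rfl⟩; exact ⟨D, hV (hgV i)⟩) φ hg
    exact ⟨Fin.cons f g, Fin.cases hfV hgV, by rwa [Fin.range_cons]⟩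

theorem exists_r_sections_cutting_out_general (r D : ℕ)
    (V : Submodule ℂ (MvPolynomial (Fin (r+1)) ℂ))
    (hVhom : V ≤ homogeneousSubmodule (Fin (r+1)) ℂ D)
    (hfin : (⋂ f ∈ (V : Set (MvPolynomial (Fin (r+1)) ℂ)), projZeroLocus r f).Finite) :
    ∃ g : Fin r → MvPolynomial (Fin (r+1)) ℂ,
      (∀ i, g i ∈ V) ∧
      (⋂ i, projZeroLocus r (g i)).Finite ∧
      (⋂ f ∈ (V : Set (MvPolynomial (Fin (r+1)) ℂ)), projZeroLocus r f)
        ⊆ ⋂ i, projZeroLocus r (g i) := by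
  have hV : ∀ p ∈ (V : Set (MvPolynomial (Fin (r+1)) ℂ)), ∃ e, p.IsHomogeneous e :=
    fun p hp => ⟨D, hVhom hp⟩
  have := hfin.to_subtype
  obtain ⟨φ, hφ0, hφZ⟩ := Projectivization.exists_dual_ne_zero_forall_apply_rep_ne_zero
    (⋂ f ∈ (V : Set (MvPolynomial (Fin (r+1)) ℂ)), projZeroLocus r f)
  have hker : finrank ℂ (LinearMap.ker φ) ≤ r := by
    simpa [Nat.lt_succ_iff] using Submodule.finrank_lt (LinearMap.ker_eq_top.not.mpr hφ0)
  obtain ⟨g, hgV, hg⟩ := exists_fin_cutsOutOrigin hVhom r hker fun v hv hvV => by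
    by_contra hv0
    exact hφZ _ ((mk_mem_iInter_projZeroLocus_iff hV hv0).mpr hvV)
      ((Projectivization.apply_mk_rep_eq_zero_iff φ hv0).mpr hv)
  refine ⟨g, hgV, ?_, fun x hx => Set.mem_iInter.mpr fun i => Set.mem_iInter₂.mp hx (g i) (hgV i)⟩
  rw [← Set.biInter_range]
  exact finite_iInter_projZeroLocus_of_cutsOutOrigin
    (by rintro _ ⟨i, rfl⟩; exact ⟨D, hVhom (hgV i)⟩) φ hg

/-- If `V` is a ℂ-linear space of homogeneous polynomials of degree `D ≥ 1` in `r+1`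
variables containing a nonzero element and the common projective zero locus `Z` of `V`
in `ℙ^r(ℂ)` is finite, then there are `f_1, …, f_r ∈ V` whose common projective zero
locus is finite and contains `Z`. -/
theorem exists_r_sections_cutting_out (r D : ℕ) (hr : 1 ≤ r) (hD : 1 ≤ D)
    (V : Submodule ℂ (MvPolynomial (Fin (r+1)) ℂ))
    (hVhom : V ≤ homogeneousSubmodule (Fin (r+1)) ℂ D)
    (hVne : ∃ f ∈ V, f ≠ 0)
    (hfin : (⋂ f ∈ (V : Set (MvPolynomial (Fin (r+1)) ℂ)), projZeroLocus r f).Finite) :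
    ∃ g : Fin r → MvPolynomial (Fin (r+1)) ℂ,
      (∀ i, g i ∈ V) ∧
      (⋂ i, projZeroLocus r (g i)).Finite ∧
      (⋂ f ∈ (V : Set (MvPolynomial (Fin (r+1)) ℂ)), projZeroLocus r f)
        ⊆ ⋂ i, projZeroLocus r (g i) :=
  exists_r_sections_cutting_out_general r D V hVhom hfin
end

section
/- Let ι be a nonempty finite type, let e be a natural number, and let A, B : ι → MvPolynomial σ ℂ (σ a finite type of variables) be families of polynomials such that every A_i and every B_i is homogeneous of degree e, the family A is not identically zero, and the polynomials A_i have no common nonconstant factor. If A_i · B_j = A_j · B_i for all i, j ∈ ι, then there exists a constant λ ∈ ℂ such that B_i = λ • A_i for every i ∈ ι. -/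
/-!
Fix `i` with `A i ≠ 0` and write `A i = d a`, `B i = d b` with `a, b` coprime. Cancelling `d` in
`A i B j = A j B i` gives `a B j = A j b`, so `a` divides every `A j` and is a unit; hence
`A i ∣ B i`, and the cross relations then force `B = c A` for one polynomial `c`. Comparing
degrees in `B i = c A i` shows that `c` is a constant.
-/

open MvPolynomial

section UniqueFactorization

variable {R ι : Type*} [CommMonoidWithZero R] [UniqueFactorizationMonoid R]

theorem dvd_of_forall_mul_eq_mul {f g : ι → R}
    (hf : ∀ q, (∀ j, q ∣ f j) → IsUnit q) (h : ∀ i j, f i * g j = f j * g i)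
    {i : ι} (hi : f i ≠ 0) : f i ∣ g i := by
  obtain ⟨a, b, d, hab, hda, hdb⟩ := UniqueFactorizationMonoid.exists_reduced_factors _ hi (g i)
  have hd : d ≠ 0 := left_ne_zero_of_mul (hda ▸ hi)
  have ha : IsUnit a := hf a fun j ↦ by
    refine hab.dvd_of_dvd_mul_right ⟨g j, mul_left_cancel₀ hd ?_⟩
    rw [mul_left_comm, hdb, ← h, ← hda, mul_assoc]
  rw [← hda, ← hdb]
  exact mul_dvd_mul_left d ha.dvd

theorem exists_eq_mul_of_forall_mul_eq_mul {f g : ι → R}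
    (hf : ∀ q, (∀ j, q ∣ f j) → IsUnit q) (hne : ∃ i, f i ≠ 0)
    (h : ∀ i j, f i * g j = f j * g i) : ∃ c, ∀ j, g j = c * f j := by
  obtain ⟨i, hi⟩ := hne
  obtain ⟨c, hc⟩ := dvd_of_forall_mul_eq_mul hf h hi
  refine ⟨c, fun j ↦ mul_left_cancel₀ hi ?_⟩
  rw [h, hc]
  ac_rfl

end UniqueFactorization

theorem MvPolynomial.IsHomogeneous.eq_C_of_mul {σ R : Type*} [CommRing R] [IsDomain R]
    {p q : MvPolynomial σ R} {n : ℕ} (hp : p.IsHomogeneous n) (hp0 : p ≠ 0)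
    (hpq : (p * q).IsHomogeneous n) : q = C (q.coeff 0) := by
  rcases eq_or_ne q 0 with rfl | hq0
  · simp
  rw [← totalDegree_eq_zero_iff_eq_C]
  have := hpq.totalDegree (mul_ne_zero hp0 hq0)
  rw [totalDegree_mul_of_isDomain hp0 hq0, hp.totalDegree hp0] at this
  omega

theorem proportional_of_cross_products_eq_general
    {ι σ : Type*} (e : ℕ)
    (A B : ι → MvPolynomial σ ℂ)
    (hA : ∀ i, (A i).IsHomogeneous e)
    (hB : ∀ i, (B i).IsHomogeneous e)
    (hne : ∃ i, A i ≠ 0)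
    (hgcd : ∀ q : MvPolynomial σ ℂ, (∀ i, q ∣ A i) → IsUnit q)
    (h : ∀ i j, A i * B j = A j * B i) :
    ∃ lam : ℂ, ∀ i, B i = lam • A i := by
  obtain ⟨c, hc⟩ := exists_eq_mul_of_forall_mul_eq_mul hgcd hne h
  obtain ⟨i, hi⟩ := hne
  have hc_const : c = C (c.coeff 0) :=
    (hA i).eq_C_of_mul hi (by rw [mul_comm, ← hc]; exact hB i)
  exact ⟨c.coeff 0, fun j ↦ by rw [hc, smul_eq_C_mul, ← hc_const]⟩

/-- If `(A_i)` and `(B_i)` are families of homogeneous polynomials of the same degree `e`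
over ℂ (indexed by a nonempty finite type, in finitely many variables), the `A_i` are not
all zero and have no common nonconstant factor, and `A_i · B_j = A_j · B_i` for all `i, j`,
then there is a constant `λ ∈ ℂ` with `B_i = λ • A_i` for all `i`. -/
theorem proportional_of_cross_products_eq
    {ι σ : Type*} [Fintype ι] [Nonempty ι] [Fintype σ] (e : ℕ)
    (A B : ι → MvPolynomial σ ℂ)
    (hA : ∀ i, (A i).IsHomogeneous e)
    (hB : ∀ i, (B i).IsHomogeneous e)
    (hne : ∃ i, A i ≠ 0)
    (hgcd : ∀ q : MvPolynomial σ ℂ, (∀ i, q ∣ A i) → IsUnit q)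
    (h : ∀ i j, A i * B j = A j * B i) :
    ∃ lam : ℂ, ∀ i, B i = lam • A i :=
  proportional_of_cross_products_eq_general e A B hA hB hne hgcd h
end

section
/- Let N ≥ 2, k ≥ 1, d ≥ 0, and let P ∈ MvPolynomial (Fin (N+1) ⊕ Fin (N+1)) ℂ be a nonzero bihomogeneous polynomial of degree d+k in the x-variables and degree k in the dx-variables whose coefficients A_I have no common nonconstant factor. Then for every invertible matrix M ∈ GL (Fin (N+1)) ℂ the following are equivalent: (i) there exists λ ∈ ℂˣ with M•P = λ • P; (ii) A_I · B_J = A_J · B_I for all exponent vectors I, J of total degree k, where B_I denotes the coefficient of (dx)^I in M•P. -/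
/-!
Choose `I₀` with `A_{I₀} ≠ 0` and cancel the common factor of `A_{I₀}` and `B_{I₀}` in the UFD
`ℂ[x]`: this leaves coprime `a, b` with `a · B_J = A_J · b` for all `J`. So `a` divides every
`A_J`, hence is a unit, and `B_J = A_J · c` for one polynomial `c`. As `A_{I₀}` and `B_{I₀}` are
homogeneous of the same degree `d + k`, `c` is a constant, nonzero because pulling back along an
invertible matrix does not kill `P`.
-/

open MvPolynomial

/-- Pullback of a `k`-symmetric form in homogeneous coordinates on `ℙ^N` by a matrix `M`:
the algebra substitution `x_i ↦ ∑ j, M i j • x_j`, `dx_i ↦ ∑ j, M i j • dx_j`,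
where the variables `Sum.inl i` are the coordinates `x_i` and `Sum.inr i` the differentials. -/
noncomputable def webPullback (N : ℕ) (M : Matrix (Fin (N+1)) (Fin (N+1)) ℂ)
    (P : MvPolynomial (Fin (N+1) ⊕ Fin (N+1)) ℂ) : MvPolynomial (Fin (N+1) ⊕ Fin (N+1)) ℂ :=
  aeval (Sum.elim
    (fun i => ∑ j, M i j • (X (Sum.inl j) : MvPolynomial (Fin (N+1) ⊕ Fin (N+1)) ℂ))
    (fun i => ∑ j, M i j • (X (Sum.inr j) : MvPolynomial (Fin (N+1) ⊕ Fin (N+1)) ℂ))) P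

/-- The coefficient polynomial `A_I ∈ ℂ[x_0,…,x_N]` of `(dx)^I` in `P`. -/
noncomputable def webCoeff (N : ℕ) (P : MvPolynomial (Fin (N+1) ⊕ Fin (N+1)) ℂ)
    (I : Fin (N+1) → ℕ) : MvPolynomial (Fin (N+1)) ℂ :=
  MvPolynomial.coeff (Finsupp.equivFunOnFinite.symm I)
    ((MvPolynomial.sumAlgEquiv ℂ (Fin (N+1)) (Fin (N+1)))
      ((MvPolynomial.renameEquiv ℂ (Equiv.sumComm (Fin (N+1)) (Fin (N+1)))) P))

namespace Finsupp

variable {S₁ S₂ : Type*} [Fintype S₁] [Fintype S₂]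

theorem weight_sumElim_one_zero (m : S₁ ⊕ S₂ →₀ ℕ) :
    weight (Sum.elim 1 0) m = ∑ i, m (Sum.inl i) := by
  simp [weight_apply, Finsupp.sum_fintype, Fintype.sum_sum_type]

theorem weight_sumElim_zero_one (m : S₁ ⊕ S₂ →₀ ℕ) :
    weight (Sum.elim 0 1) m = ∑ i, m (Sum.inr i) := by
  simp [weight_apply, Finsupp.sum_fintype, Fintype.sum_sum_type]

end Finsupp

theorem exists_forall_eq_mul_of_mul_eq_mul {R ι : Type*} [CommMonoidWithZero R]
    [UniqueFactorizationMonoid R] {s : Set ι} {A B : ι → R}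
    (hA : ∀ q, (∀ i ∈ s, q ∣ A i) → IsUnit q) {i₀ : ι} (hi₀ : i₀ ∈ s) (hA₀ : A i₀ ≠ 0)
    (hAB : ∀ i ∈ s, ∀ j ∈ s, A i * B j = A j * B i) :
    ∃ c, ∀ j ∈ s, B j = A j * c := by
  obtain ⟨a, b, g, hab, hga, hgb⟩ :=
    UniqueFactorizationMonoid.exists_reduced_factors (A i₀) hA₀ (B i₀)
  have hg : g ≠ 0 := by rintro rfl; exact hA₀ (by rw [← hga, zero_mul])
  have hcross : ∀ j ∈ s, a * B j = A j * b := fun j hj =>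
    mul_left_cancel₀ hg (by rw [← mul_assoc, hga, hAB i₀ hi₀ j hj, ← hgb, mul_left_comm])
  obtain ⟨u, rfl⟩ : IsUnit a :=
    hA a fun j hj => hab.dvd_of_dvd_mul_right ⟨B j, (hcross j hj).symm⟩
  exact ⟨↑u⁻¹ * b, fun j hj => by rw [mul_left_comm, ← hcross j hj, Units.inv_mul_cancel_left]⟩

namespace MvPolynomial

theorem IsHomogeneous.eq_C_of_eq_mul {σ R : Type*} [CommRing R] [IsDomain R]
    {A B c : MvPolynomial σ R} {n : ℕ} (hA : A.IsHomogeneous n) (hA₀ : A ≠ 0)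
    (hB : B.IsHomogeneous n) (h : B = A * c) : c = C (coeff 0 c) := by
  rcases eq_or_ne c 0 with rfl | hc
  · simp
  have hdeg := totalDegree_mul_of_isDomain hA₀ hc
  rw [← h, hB.totalDegree (h ▸ mul_ne_zero hA₀ hc), hA.totalDegree hA₀] at hdeg
  exact totalDegree_eq_zero_iff_eq_C.mp (by omega)

theorem IsWeightedHomogeneous.aeval {σ τ R M : Type*} [CommSemiring R]
    [AddCommMonoid M] {w : σ → M} {w' : τ → M} {φ : MvPolynomial σ R} {n : M}
    (hφ : IsWeightedHomogeneous w φ n) {g : σ → MvPolynomial τ R}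
    (hg : ∀ i, IsWeightedHomogeneous w' (g i) (w i)) :
    IsWeightedHomogeneous w' (aeval g φ) n := by
  apply IsWeightedHomogeneous.sum
  intro d hd
  rw [← zero_add n]
  refine (isWeightedHomogeneous_C w' _).mul ?_
  rw [← hφ (mem_support_iff.mp hd), Finsupp.weight_apply, Finsupp.sum]
  exact IsWeightedHomogeneous.prod _ _ _ fun i _ => (hg i).pow _

section SumVariables

variable {R S₁ S₂ : Type*} [CommSemiring R]

theorem sumAlgEquiv_monomial_sumElim (p : S₁ →₀ ℕ) (q : S₂ →₀ ℕ) (a : R) :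
    sumAlgEquiv R S₁ S₂ (monomial (p.sumElim q) a) = monomial p (monomial q a) := by
  simp [sumAlgEquiv, monomial, AddMonoidAlgebra.curryAlgEquiv_single]

theorem coeff_coeff_sumAlgEquiv (P : MvPolynomial (S₁ ⊕ S₂) R) (m : S₁ →₀ ℕ) (n : S₂ →₀ ℕ) :
    coeff n (coeff m (sumAlgEquiv R S₁ S₂ P)) = coeff (m.sumElim n) P := by
  classical
  induction P using MvPolynomial.induction_on' with
  | add P Q hP hQ => simp only [map_add, coeff_add, hP, hQ]
  | monomial u a =>
    obtain ⟨p, q, rfl⟩ : ∃ (p : S₁ →₀ ℕ) (q : S₂ →₀ ℕ), u = p.sumElim q :=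
      ⟨_, _, (Finsupp.comapDomain_sumElim_comapDomain u).symm⟩
    have hpq : p.sumElim q = m.sumElim n ↔ p = m ∧ q = n := by
      simpa using Finsupp.sumFinsuppEquivProdFinsupp.symm.injective.eq_iff
        (a := (p, q)) (b := (m, n))
    simp only [sumAlgEquiv_monomial_sumElim, coeff_monomial, apply_ite (coeff n), coeff_zero,
      hpq, ite_and]

variable [Fintype S₁] [Fintype S₂]

def IsBihomogeneous (P : MvPolynomial (S₁ ⊕ S₂) R) (a b : ℕ) : Prop :=
  ∀ m ∈ P.support, (∑ i, m (Sum.inl i)) = a ∧ (∑ i, m (Sum.inr i)) = b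

theorem isBihomogeneous_iff {P : MvPolynomial (S₁ ⊕ S₂) R} {a b : ℕ} :
    IsBihomogeneous P a b ↔ IsWeightedHomogeneous (Sum.elim 1 0) P a ∧
      IsWeightedHomogeneous (Sum.elim 0 1) P b := by
  simp only [IsBihomogeneous, IsWeightedHomogeneous, Finsupp.weight_sumElim_one_zero,
    Finsupp.weight_sumElim_zero_one, mem_support_iff, ← forall_and]

theorem IsBihomogeneous.smul {P : MvPolynomial (S₁ ⊕ S₂) R} {a b : ℕ}
    (hP : IsBihomogeneous P a b) (r : R) : IsBihomogeneous (r • P) a b :=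
  fun m hm => hP m (support_smul hm)

end SumVariables

end MvPolynomial

section Web

variable {N : ℕ}

theorem coeff_webCoeff (P : MvPolynomial (Fin (N+1) ⊕ Fin (N+1)) ℂ) (n : Fin (N+1) →₀ ℕ)
    (I : Fin (N+1) → ℕ) :
    coeff n (webCoeff N P I) = coeff (n.sumElim (Finsupp.equivFunOnFinite.symm I)) P := by
  rw [webCoeff, coeff_coeff_sumAlgEquiv, renameEquiv_apply, ← Finsupp.mapDomain_swap_sumElim]
  exact coeff_rename_mapDomain _ (Equiv.sumComm _ _).injective _ _

theorem coeff_eq_coeff_webCoeff (P : MvPolynomial (Fin (N+1) ⊕ Fin (N+1)) ℂ)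
    (m : Fin (N+1) ⊕ Fin (N+1) →₀ ℕ) :
    coeff m P = coeff (m.comapDomain Sum.inl Sum.inl_injective.injOn)
      (webCoeff N P (m.comapDomain Sum.inr Sum.inr_injective.injOn)) := by
  rw [coeff_webCoeff, Finsupp.equivFunOnFinite_symm_coe,
    Finsupp.comapDomain_sumElim_comapDomain]

theorem webCoeff_smul (P : MvPolynomial (Fin (N+1) ⊕ Fin (N+1)) ℂ) (r : ℂ)
    (I : Fin (N+1) → ℕ) : webCoeff N (r • P) I = r • webCoeff N P I := by
  simp only [webCoeff, map_smul, coeff_smul]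

theorem webPullback_one (P : MvPolynomial (Fin (N+1) ⊕ Fin (N+1)) ℂ) :
    webPullback N 1 P = P := by
  rw [webPullback]
  convert aeval_X_left_apply P
  ext (i | i) <;> simp [Matrix.one_apply]

theorem webPullback_webPullback (M M' : Matrix (Fin (N+1)) (Fin (N+1)) ℂ)
    (P : MvPolynomial (Fin (N+1) ⊕ Fin (N+1)) ℂ) :
    webPullback N M' (webPullback N M P) = webPullback N (M * M') P := by
  simp only [webPullback, ← AlgHom.comp_apply, comp_aeval]
  congr 2
  funext s
  cases s <;>
    simp only [Sum.elim_inl, Sum.elim_inr, map_sum, map_smul, aeval_X, Matrix.mul_apply,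
      Finset.smul_sum, Finset.sum_smul, smul_smul] <;>
    exact Finset.sum_comm

theorem webPullback_ne_zero (M : GL (Fin (N+1)) ℂ) {P : MvPolynomial (Fin (N+1) ⊕ Fin (N+1)) ℂ}
    (hP : P ≠ 0) : webPullback N M P ≠ 0 := by
  intro h
  apply hP
  rw [← webPullback_one P, ← Units.mul_inv M, ← webPullback_webPullback, h, webPullback,
    map_zero]

namespace MvPolynomial.IsBihomogeneous

variable {P Q : MvPolynomial (Fin (N+1) ⊕ Fin (N+1)) ℂ} {a b : ℕ}

theorem webPullback (hP : IsBihomogeneous P a b) (M : Matrix (Fin (N+1)) (Fin (N+1)) ℂ) :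
    IsBihomogeneous (webPullback N M P) a b := by
  have hlinear : ∀ (u v : ℕ) (s : Fin (N+1) ⊕ Fin (N+1)),
      IsWeightedHomogeneous (Sum.elim (fun _ => u) (fun _ => v))
        (Sum.elim (fun i => ∑ j, M i j • (X (Sum.inl j) : MvPolynomial _ ℂ))
          (fun i => ∑ j, M i j • X (Sum.inr j)) s)
        (Sum.elim (fun _ => u) (fun _ => v) s) := by
    rintro u v (i | i) <;>
      exact IsWeightedHomogeneous.sum _ _ _ fun j _ => by
        rw [smul_eq_C_mul]; exact (isWeightedHomogeneous_X _ _ _).C_mul _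
  obtain ⟨hx, hdx⟩ := isBihomogeneous_iff.mp hP
  exact isBihomogeneous_iff.mpr ⟨hx.aeval (hlinear 1 0), hdx.aeval (hlinear 0 1)⟩

theorem isHomogeneous_webCoeff (hP : IsBihomogeneous P a b) (I : Fin (N+1) → ℕ) :
    (webCoeff N P I).IsHomogeneous a := by
  intro n hn
  rw [coeff_webCoeff] at hn
  rw [Pi.one_def, ← Finsupp.degree_eq_weight_one, Finsupp.degree_eq_sum]
  simpa using (hP _ (mem_support_iff.mpr hn)).1

theorem ext_webCoeff (hP : IsBihomogeneous P a b) (hQ : IsBihomogeneous Q a b)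
    (h : ∀ J : Fin (N+1) → ℕ, (∑ i, J i) = b → webCoeff N P J = webCoeff N Q J) : P = Q := by
  ext m
  by_cases hm : (∑ i, m (Sum.inr i)) = b
  · rw [coeff_eq_coeff_webCoeff P, coeff_eq_coeff_webCoeff Q, h _ (by simpa using hm)]
  · rw [notMem_support_iff.mp fun h => hm (hP m h).2,
      notMem_support_iff.mp fun h => hm (hQ m h).2]

theorem exists_webCoeff_ne_zero (hP : IsBihomogeneous P a b) (hP₀ : P ≠ 0) :
    ∃ I : Fin (N+1) → ℕ, (∑ i, I i) = b ∧ webCoeff N P I ≠ 0 := by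
  by_contra! h
  exact hP₀ (hP.ext_webCoeff (fun m hm => by simp at hm) fun J hJ => by
    rw [h J hJ]; simp [webCoeff])

end MvPolynomial.IsBihomogeneous

end Web

theorem preserves_web_iff_cross_products_general (N k d : ℕ)
    (P : MvPolynomial (Fin (N+1) ⊕ Fin (N+1)) ℂ) (hP : P ≠ 0)
    (hbihom : ∀ m ∈ P.support,
      (∑ i, m (Sum.inl i)) = d + k ∧ (∑ i, m (Sum.inr i)) = k)
    (hgcd : ∀ q : MvPolynomial (Fin (N+1)) ℂ,
      (∀ I : Fin (N+1) → ℕ, (∑ i, I i) = k → q ∣ webCoeff N P I) → IsUnit q) :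
    ∀ M : GL (Fin (N+1)) ℂ,
      (∃ lam : ℂˣ, webPullback N (M : Matrix (Fin (N+1)) (Fin (N+1)) ℂ) P = (lam : ℂ) • P) ↔
      (∀ I J : Fin (N+1) → ℕ, (∑ i, I i) = k → (∑ i, J i) = k →
        webCoeff N P I * webCoeff N (webPullback N (M : Matrix (Fin (N+1)) (Fin (N+1)) ℂ) P) J
          = webCoeff N P J * webCoeff N (webPullback N (M : Matrix (Fin (N+1)) (Fin (N+1)) ℂ) P) I) := by
  intro M
  have hPbi : IsBihomogeneous P (d + k) k := hbihom
  constructor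
  · rintro ⟨lam, hlam⟩ I J - -
    rw [hlam, webCoeff_smul, webCoeff_smul, mul_smul_comm, mul_smul_comm, mul_comm]
  · intro hcross
    obtain ⟨I₀, hI₀, hA₀⟩ := hPbi.exists_webCoeff_ne_zero hP
    obtain ⟨c, hc⟩ := exists_forall_eq_mul_of_mul_eq_mul
      (s := {I : Fin (N+1) → ℕ | ∑ i, I i = k}) hgcd hI₀ hA₀ fun I hI J hJ => hcross I J hI hJ
    have hpull := hPbi.webPullback M
    obtain ⟨lam, rfl⟩ : ∃ lam, c = C lam := ⟨_, (hPbi.isHomogeneous_webCoeff I₀).eq_C_of_eq_mul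
      hA₀ (hpull.isHomogeneous_webCoeff I₀) (hc I₀ hI₀)⟩
    have hMP : webPullback N M P = lam • P := hpull.ext_webCoeff (hPbi.smul lam) fun J hJ => by
      rw [hc J hJ, webCoeff_smul, smul_eq_C_mul, mul_comm]
    have hlam : lam ≠ 0 := by
      rintro rfl
      exact webPullback_ne_zero M hP (by rw [hMP, zero_smul])
    exact ⟨Units.mk0 lam hlam, hMP⟩

/-- Let `P` encode a `k`-web of degree `d` on `ℙ^N` (nonzero, bihomogeneous of bidegree
`(d+k, k)`, coefficients `A_I` with no common nonconstant factor). An invertible matrix `M`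
preserves the web (i.e. `M•P = λ • P` for some `λ ∈ ℂˣ`) if and only if
`A_I · B_J = A_J · B_I` for all exponent vectors `I, J` of total degree `k`, where `B_I` is
the coefficient of `(dx)^I` in the pullback `M•P`. -/
theorem preserves_web_iff_cross_products (N k d : ℕ) (hN : 2 ≤ N) (hk : 1 ≤ k)
    (P : MvPolynomial (Fin (N+1) ⊕ Fin (N+1)) ℂ) (hP : P ≠ 0)
    (hbihom : ∀ m ∈ P.support,
      (∑ i, m (Sum.inl i)) = d + k ∧ (∑ i, m (Sum.inr i)) = k)
    (hgcd : ∀ q : MvPolynomial (Fin (N+1)) ℂ,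
      (∀ I : Fin (N+1) → ℕ, (∑ i, I i) = k → q ∣ webCoeff N P I) → IsUnit q) :
    ∀ M : GL (Fin (N+1)) ℂ,
      (∃ lam : ℂˣ, webPullback N (M : Matrix (Fin (N+1)) (Fin (N+1)) ℂ) P = (lam : ℂ) • P) ↔
      (∀ I J : Fin (N+1) → ℕ, (∑ i, I i) = k → (∑ i, J i) = k →
        webCoeff N P I * webCoeff N (webPullback N (M : Matrix (Fin (N+1)) (Fin (N+1)) ℂ) P) J
          = webCoeff N P J * webCoeff N (webPullback N (M : Matrix (Fin (N+1)) (Fin (N+1)) ℂ) P) I) :=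
  preserves_web_iff_cross_products_general N k d P hP hbihom hgcd
end
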